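/- Let ℛ be a right-linear TRS over 𝓖 and let 𝒞_T(ℛ) be the automaton obtained by saturating the union of 𝒜_T and ℬ(ℛ) under the saturation inference rule. Then (→_ℛ*)[T] ⊆ L(𝒞_T(ℛ)), i.e., every ground term that rewrites in ℛ to a term of T is accepted by 𝒞_T(ℛ). -/

import Mathlib

set_option maxHeartbeats 1000000

/-! ## Terms over a signature -/

/-- Terms over a signature given by a type `F` of function symbols together with
an arity function `ar`; variables are natural numbers. -/
inductive Term (F : Type) (ar : F → ℕ) : Type
  | var : ℕ → Term F ar
  | app : (f : F) → (Fin (ar f) → Term F ar) → Term F ar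

namespace Term

variable {F : Type} {ar : F → ℕ}

/-- The (finite) set of variables of a term. -/
def vars : Term F ar → Finset ℕ
  | var n => {n}
  | app _ ts => Finset.univ.biUnion fun i => (ts i).vars

/-- A term is ground if it contains no variables. -/
def Ground (t : Term F ar) : Prop := t.vars = ∅

/-- The number of occurrences of the variable `n` in a term. -/
def count (n : ℕ) : Term F ar → ℕ
  | var m => if m = n then 1 else 0
  | app _ ts => ∑ i, (ts i).count n

/-- A term is linear if no variable occurs twice in it. -/
def Linear (t : Term F ar) : Prop := ∀ n, t.count n ≤ 1

/-- Applying a substitution to a term. -/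
def subst (σ : ℕ → Term F ar) : Term F ar → Term F ar
  | var n => σ n
  | app f ts => app f fun i => (ts i).subst σ

/-- The subterm at a position (a list of argument indices), if the position is valid. -/
def subtermAt : Term F ar → List ℕ → Option (Term F ar)
  | t, [] => some t
  | var _, _ :: _ => none
  | app f ts, i :: p => if h : i < ar f then (ts ⟨i, h⟩).subtermAt p else none

/-- Replacing the subterm at a position, if the position is valid. -/
def replaceAt : Term F ar → List ℕ → Term F ar → Option (Term F ar)
  | _, [], u => some u
  | var _, _ :: _, _ => none
  | app f ts, i :: p, u =>
      if h : i < ar f then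
        ((ts ⟨i, h⟩).replaceAt p u).map fun s => app f (Function.update ts ⟨i, h⟩ s)
      else none

/-- `s.IsSubtermOf t` : `s` is a subterm of `t`. -/
def IsSubtermOf (s t : Term F ar) : Prop := ∃ p, t.subtermAt p = some s

/-- Relabelling of function symbols along an arity-preserving map of signatures. -/
def relabel {G : Type} {arG : G → ℕ} (φ : F → G) (h : ∀ f, arG (φ f) = ar f) :
    Term F ar → Term G arG
  | var n => var n
  | app f ts => app (φ f) fun i => (ts (Fin.cast (h f) i)).relabel φ h

end Term

/-! ## Rewriting -/

/-- One-step rewriting with a set of rewrite rules: there are a position `p` of `s`,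
a rule `(l, r)` and a substitution `σ` with `s|_p = lσ` and `t = s[rσ]_p`. -/
def Rewrites {F : Type} {ar : F → ℕ} (R : Set (Term F ar × Term F ar))
    (s t : Term F ar) : Prop :=
  ∃ (p : List ℕ) (l r : Term F ar) (σ : ℕ → Term F ar),
    (l, r) ∈ R ∧ s.subtermAt p = some (l.subst σ) ∧ s.replaceAt p (r.subst σ) = some t

/-- Many-step rewriting (reflexive–transitive closure). -/
abbrev RewritesStar {F : Type} {ar : F → ℕ} (R : Set (Term F ar × Term F ar)) :
    Term F ar → Term F ar → Prop :=
  Relation.ReflTransGen (Rewrites R)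

/-- A term rewriting system: a finite set of rules whose left-hand sides are not variables. -/
structure TRS (F : Type) (ar : F → ℕ) where
  rules : Set (Term F ar × Term F ar)
  finite : rules.Finite
  lhs_not_var : ∀ lr ∈ rules, ∀ n, lr.1 ≠ Term.var n

namespace TRS

variable {F : Type} {ar : F → ℕ}

def LeftLinear (R : TRS F ar) : Prop := ∀ lr ∈ R.rules, lr.1.Linear

def RightLinear (R : TRS F ar) : Prop := ∀ lr ∈ R.rules, lr.2.Linear

/-- A TRS is linear if all left- and right-hand sides are linear terms. -/
def IsLinear (R : TRS F ar) : Prop := R.LeftLinear ∧ R.RightLinear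

/-- A TRS is growing if every variable occurring both in the left- and the right-hand
side of a rule occurs at depth 1 in the left-hand side. -/
def Growing (R : TRS F ar) : Prop :=
  ∀ lr ∈ R.rules, ∀ n ∈ lr.1.vars, n ∈ lr.2.vars →
    ∀ (f : F) (ts : Fin (ar f) → Term F ar), lr.1 = Term.app f ts →
      ∀ i, n ∈ (ts i).vars → ts i = Term.var n

/-- A redex is an instance of a left-hand side. -/
def IsRedex (R : TRS F ar) (s : Term F ar) : Prop :=
  ∃ lr ∈ R.rules, ∃ σ : ℕ → Term F ar, s = lr.1.subst σ

/-- `p` is a redex position of `s`. -/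
def RedexPos (R : TRS F ar) (s : Term F ar) (p : List ℕ) : Prop :=
  ∃ u, s.subtermAt p = some u ∧ R.IsRedex u

def Reducible (R : TRS F ar) (s : Term F ar) : Prop := ∃ p, R.RedexPos s p

/-- A term is root-stable if it cannot be rewritten to a redex. -/
def RootStable (R : TRS F ar) (s : Term F ar) : Prop :=
  ¬ ∃ t, RewritesStar R.rules s t ∧ R.IsRedex t

/-- Ground normal forms. -/
def NFset (R : TRS F ar) : Set (Term F ar) := { t | t.Ground ∧ ¬ R.Reducible t }

/-- Ground redexes. -/
def RedexSet (R : TRS F ar) : Set (Term F ar) := { t | t.Ground ∧ R.IsRedex t }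

/-- Root-stable ground terms. -/
def RSset (R : TRS F ar) : Set (Term F ar) := { t | t.Ground ∧ R.RootStable t }

/-- Relabelling a TRS along an arity-preserving map of signatures. -/
def relabel {G : Type} {arG : G → ℕ} (R : TRS F ar) (φ : F → G)
    (h : ∀ f, arG (φ f) = ar f) : TRS G arG where
  rules := (fun lr => (lr.1.relabel φ h, lr.2.relabel φ h)) '' R.rules
  finite := R.finite.image _
  lhs_not_var := by
    rintro lr ⟨lr0, h0, rfl⟩ n hn
    dsimp only at hn
    cases h1 : lr0.1 with
    | var m => exact absurd h1 (R.lhs_not_var lr0 h0 m)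
    | app f ts =>
        rw [h1] at hn
        simp only [Term.relabel] at hn
        cases hn

end TRS

/-! ## Tree automata -/

/-- A transition rule `f(q₁,…,qₙ) → q` of a bottom-up tree automaton. -/
abbrev TARule (F : Type) (ar : F → ℕ) (Q : Type) : Type :=
  (f : F) × ((Fin (ar f) → Q) × Q)

/-- A (finite bottom-up) tree automaton without ε-transitions. -/
structure TreeAutomaton (F : Type) (ar : F → ℕ) (Q : Type) where
  trans : Set (TARule F ar Q)
  final : Set Q

/-- `Reaches Δ t q` : the ground term `t` rewrites to the state `q` using the
transition rules `Δ`. -/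
inductive Reaches {F : Type} {ar : F → ℕ} {Q : Type} (Δ : Set (TARule F ar Q)) :
    Term F ar → Q → Prop
  | app {f : F} {ts : Fin (ar f) → Term F ar} {qs : Fin (ar f) → Q} {q : Q} :
      (∀ i, Reaches Δ (ts i) (qs i)) → (⟨f, qs, q⟩ : TARule F ar Q) ∈ Δ →
      Reaches Δ (Term.app f ts) q

/-- `ReachesT Δ θ t q` : the term `t`, whose variables are interpreted as the states
given by `θ`, rewrites to the state `q` using the transition rules `Δ`. -/
inductive ReachesT {F : Type} {ar : F → ℕ} {Q : Type} (Δ : Set (TARule F ar Q))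
    (θ : ℕ → Q) : Term F ar → Q → Prop
  | var (n : ℕ) : ReachesT Δ θ (Term.var n) (θ n)
  | app {f : F} {ts : Fin (ar f) → Term F ar} {qs : Fin (ar f) → Q} {q : Q} :
      (∀ i, ReachesT Δ θ (ts i) (qs i)) → (⟨f, qs, q⟩ : TARule F ar Q) ∈ Δ →
      ReachesT Δ θ (Term.app f ts) q

/-- The language of a tree automaton: all ground terms reaching a final state. -/
def Lang {F : Type} {ar : F → ℕ} {Q : Type} (A : TreeAutomaton F ar Q) :
    Set (Term F ar) :=
  { t | t.Ground ∧ ∃ q ∈ A.final, Reaches A.trans t q }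

/-- A set of ground terms is recognizable if it is the language of some finite
tree automaton. -/
def Recognizable {F : Type} {ar : F → ℕ} (T : Set (Term F ar)) : Prop :=
  ∃ (Q : Type) (_ : Fintype Q) (A : TreeAutomaton F ar Q), T = Lang A

/-- The set of states occurring in a set of transition rules. -/
def statesOf {F : Type} {ar : F → ℕ} {Q : Type} (Γ : Set (TARule F ar Q)) : Set Q :=
  { q | ∃ ρ ∈ Γ, ρ.2.2 = q ∨ ∃ i, ρ.2.1 i = q }

/-! ## The automaton `ℬ(ℛ)` -/

/-- The canonical representative of the state `⟨t⟩` of `ℬ(ℛ)`: all variables are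
identified with the single state `⟨x⟩`, represented by `var 0`. -/
def stPattern {F : Type} {ar : F → ℕ} : Term F ar → Term F ar
  | Term.var _ => Term.var 0
  | Term.app f ts => Term.app f ts

/-- `S_ℛ`: the set of all subterms of arguments of left-hand sides of `ℛ`. -/
def SR {F : Type} {ar : F → ℕ} (R : TRS F ar) : Set (Term F ar) :=
  { s | ∃ lr ∈ R.rules, ∃ (f : F) (ts : Fin (ar f) → Term F ar),
        lr.1 = Term.app f ts ∧ ∃ i, s.IsSubtermOf (ts i) }

/-- The representatives of the states of `ℬ(ℛ)`: the patterns of terms of `S_ℛ`,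
together with `⟨x⟩`. -/
def BStateSet {F : Type} {ar : F → ℕ} (R : TRS F ar) : Set (Term F ar) :=
  stPattern '' SR R ∪ {Term.var 0}

/-- The matching rules of `ℬ(ℛ)` (with states encoded by `enc`):
`f(⟨t₁⟩,…,⟨tₙ⟩) → ⟨t⟩` for every `t = f(t₁,…,tₙ) ∈ S_ℛ`. -/
def BMatch {F : Type} {ar : F → ℕ} {Q : Type} (R : TRS F ar) (enc : Term F ar → Q) :
    Set (TARule F ar Q) :=
  { ρ | ∃ (f : F) (ts : Fin (ar f) → Term F ar), Term.app f ts ∈ SR R ∧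
        ρ = ⟨f, fun i => enc (stPattern (ts i)), enc (Term.app f ts)⟩ }

/-- The propagation rules `f(⟨x⟩,…,⟨x⟩) → ⟨x⟩` for every function symbol `f`. -/
def BProp {F : Type} {ar : F → ℕ} {Q : Type} (enc : Term F ar → Q) :
    Set (TARule F ar Q) :=
  { ρ | ∃ f : F, ρ = ⟨f, fun _ => enc (Term.var 0), enc (Term.var 0)⟩ }

/-- The transition rules of the automaton `ℬ(ℛ)`. -/
def BTrans {F : Type} {ar : F → ℕ} {Q : Type} (R : TRS F ar) (enc : Term F ar → Q) :
    Set (TARule F ar Q) :=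
  BMatch R enc ∪ BProp enc

/-- `Σ(t)`: the set of ground instances of the term `t`. -/
def GInst {F : Type} {ar : F → ℕ} (t : Term F ar) : Set (Term F ar) :=
  { s | s.Ground ∧ ∃ σ, s = t.subst σ }

/-! ## Saturation -/

/-- The state `qᵢ` associated to the argument `lᵢ` of a left-hand side in the
saturation rule: `lᵢθ` if `lᵢ` is a variable occurring in `r` (whose variable set
is `rv`), and `⟨lᵢ⟩` otherwise. -/
def satArg {F : Type} {ar : F → ℕ} {Q : Type} (enc : Term F ar → Q) (θ : ℕ → Q)
    (rv : Finset ℕ) : Term F ar → Q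
  | Term.var n => if n ∈ rv then θ n else enc (Term.var 0)
  | Term.app f ts => enc (Term.app f ts)

/-- One step of the saturation process: add all transition rules `f(q₁,…,qₙ) → q`
obtained from a rewrite rule `f(l₁,…,lₙ) → r` and a state substitution `θ`
(with values among the states `Qc` of the automaton) such that `rθ →_Γ* q`. -/
def satStep {F : Type} {ar : F → ℕ} {Q : Type} (R : TRS F ar) (enc : Term F ar → Q)
    (Qc : Set Q) (Γ : Set (TARule F ar Q)) : Set (TARule F ar Q) :=
  Γ ∪ { ρ | ∃ (f : F) (ls : Fin (ar f) → Term F ar) (r : Term F ar) (θ : ℕ → Q) (q : Q),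
        (Term.app f ls, r) ∈ R.rules ∧ (∀ n ∈ r.vars, θ n ∈ Qc) ∧ ReachesT Γ θ r q ∧
        ρ = ⟨f, fun i => satArg enc θ r.vars (ls i), q⟩ }

/-- The saturated set of transition rules: the closure of `Γ0` under the saturation
inference rule. -/
def satGamma {F : Type} {ar : F → ℕ} {Q : Type} (R : TRS F ar) (enc : Term F ar → Q)
    (Qc : Set Q) (Γ0 : Set (TARule F ar Q)) : Set (TARule F ar Q) :=
  ⋃ n, (satStep R enc Qc)^[n] Γ0

/-! ## The automaton `𝒞_T(ℛ)` and its extension `𝒞'_T(ℛ)` -/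

/-- The data of the construction of the automaton `𝒞_T(ℛ)`: an automaton `𝒜_T`
recognizing `T` with all states accessible and state set `QA`, together with an
encoding `enc` of the states `⟨t⟩` of `ℬ(ℛ)` into the common state type `Q`, such
that every state common to `𝒜_T` and `ℬ(ℛ)` accepts the same set of terms in both
automata. -/
structure CSetup {G : Type} [Fintype G] {arG : G → ℕ} (Q : Type) [Fintype Q]
    (Rg : TRS G arG) (T : Set (Term G arG)) where
  enc : Term G arG → Q
  A : TreeAutomaton G arG Q
  QA : Set Q
  henc : Set.InjOn enc (BStateSet Rg)
  hAstates : ∀ ρ ∈ A.trans, ρ.2.2 ∈ QA ∧ ∀ i, ρ.2.1 i ∈ QA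
  hfinal : A.final ⊆ QA
  hacc : ∀ q ∈ QA, ∃ s : Term G arG, s.Ground ∧ Reaches A.trans s q
  hground : ∃ s : Term G arG, s.Ground
  hshared : ∀ q ∈ QA ∩ enc '' BStateSet Rg, ∀ s : Term G arG,
      Reaches A.trans s q ↔ Reaches (BTrans Rg enc) s q
  hT : T = Lang A

namespace CSetup

variable {G : Type} [Fintype G] {arG : G → ℕ} {Q : Type} [Fintype Q]
  {Rg : TRS G arG} {T : Set (Term G arG)}

/-- The set of states of the automaton `𝒞_T(ℛ)`. -/
def Qstates (C : CSetup Q Rg T) : Set Q := C.QA ∪ C.enc '' BStateSet Rg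

/-- The transition rules of `𝒞_T(ℛ)` before saturation: the union of `𝒜_T` and `ℬ(ℛ)`. -/
def Γ0 (C : CSetup Q Rg T) : Set (TARule G arG Q) := C.A.trans ∪ BTrans Rg C.enc

/-- The transition rules of `𝒞_T(ℛ)` after saturation. -/
def Γsat (C : CSetup Q Rg T) : Set (TARule G arG Q) :=
  satGamma Rg C.enc C.Qstates C.Γ0

end CSetup

/-- The redex rules `f(⟪l₁⟫,…,⟪lₙ⟫) → q_r` for every left-hand side `f(l₁,…,lₙ)`. -/
def RedexRules {F : Type} {ar : F → ℕ} {Q : Type} (R : TRS F ar)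
    (enc2 : Term F ar → Q) (qr : Q) : Set (TARule F ar Q) :=
  { ρ | ∃ (f : F) (ls : Fin (ar f) → Term F ar) (r : Term F ar),
        (Term.app f ls, r) ∈ R.rules ∧
        ρ = ⟨f, fun i => enc2 (stPattern (ls i)), qr⟩ }

/-- The rules `f(⟨x⟩,…,q_r,…,⟨x⟩) → q_r`. -/
def QrProp {F : Type} {ar : F → ℕ} {Q : Type} (enc : Term F ar → Q) (qr : Q) :
    Set (TARule F ar Q) :=
  { ρ | ∃ (f : F) (j : Fin (ar f)),
        ρ = ⟨f, fun i => if i = j then qr else enc (Term.var 0), qr⟩ }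

/-- The data of the construction of the automaton `𝒞'_T(ℛ)`: `𝒞_T(ℛ)` extended with
a fresh copy `⟪t⟫` (encoded by `enc2`, with `⟪x⟫ = ⟨x⟩`) of the states of `ℬ(ℛ)` and
a fresh state `q_r`. -/
structure CpSetup {G : Type} [Fintype G] {arG : G → ℕ} (Q : Type) [Fintype Q]
    (Rg : TRS G arG) (T : Set (Term G arG)) extends CSetup Q Rg T where
  enc2 : Term G arG → Q
  qr : Q
  henc2 : Set.InjOn enc2 (BStateSet Rg)
  hx : enc2 (Term.var 0) = enc (Term.var 0)
  hfresh : (enc2 '' (BStateSet Rg \ {Term.var 0}) ∪ {qr}) ∩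
              (QA ∪ enc '' BStateSet Rg) = ∅
  hqr : qr ∉ enc2 '' (BStateSet Rg \ {Term.var 0})

namespace CpSetup

variable {G : Type} [Fintype G] {arG : G → ℕ} {Q : Type} [Fintype Q]
  {Rg : TRS G arG} {T : Set (Term G arG)}

/-- The transition rules `Γ'` of the automaton `𝒞'_T(ℛ)`. -/
def Γ' (C : CpSetup Q Rg T) : Set (TARule G arG Q) :=
  C.toCSetup.Γsat ∪ BMatch Rg C.enc2 ∪ RedexRules Rg C.enc2 C.qr ∪ QrProp C.enc C.qr

end CpSetup

/-! ## The signature `𝓖 = 𝓕 ∪ {•}` -/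

/-- The arity function of the extended signature `𝓕 ∪ {•}` (with `•` the fresh
constant `none`). -/
def arB {F : Type} (ar : F → ℕ) : Option F → ℕ
  | none => 0
  | some f => ar f

/-- The term `•`. -/
def bulletTm {F : Type} {ar : F → ℕ} : Term (Option F) (arB ar) :=
  Term.app none Fin.elim0

/-- The embedding of `𝒯(𝓕)`-terms into terms over `𝓕 ∪ {•}`. -/
def liftB {F : Type} {ar : F → ℕ} : Term F ar → Term (Option F) (arB ar) :=
  Term.relabel some (fun _ => rfl)

/-- A TRS over `𝓕` viewed as a TRS over `𝓕 ∪ {•}`. -/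
def TRS.liftB {F : Type} {ar : F → ℕ} (R : TRS F ar) : TRS (Option F) (arB ar) :=
  R.relabel some (fun _ => rfl)

/-- The TRS `ℛ• = ℛ ∪ {• → •}` over the signature `𝓕 ∪ {•}`. -/
def TRS.bullet {F : Type} {ar : F → ℕ} (R : TRS F ar) : TRS (Option F) (arB ar) where
  rules := R.liftB.rules ∪ {(bulletTm, bulletTm)}
  finite := R.liftB.finite.union (Set.finite_singleton _)
  lhs_not_var := by
    rintro lr (h | h) n hn
    · exact R.liftB.lhs_not_var lr h n hn
    · rw [Set.mem_singleton_iff] at h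
      rw [h] at hn
      cases hn

/-! ## The automaton `𝒟(ℛ)` -/

/-- For a symbol `g` and sets of states `Ss` for the arguments, the set
`g(S₁,…,Sₙ)↓` of states reachable from `g` applied to states chosen from the `Ssᵢ`. -/
def oneStep {G : Type} {arG : G → ℕ} {Q : Type} (Γ : Set (TARule G arG Q)) (g : G)
    (Ss : Fin (arG g) → Set Q) : Set Q :=
  { q | ∃ qs : Fin (arG g) → Q, (∀ i, qs i ∈ Ss i) ∧ (⟨g, qs, q⟩ : TARule G arG Q) ∈ Γ }

/-- `t↓` for a ground term `t`: the set of states reachable from `t`. -/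
def dn {G : Type} {arG : G → ℕ} {Q : Type} (Γ : Set (TARule G arG Q))
    (t : Term G arG) : Set Q :=
  { q | Reaches Γ t q }

/-- There is a rewrite rule with left-hand side `g(l₁,…,lₙ)` such that
`⟪lᵢ⟫ ∈ Ssᵢ` for all `i`. -/
def LhsMatch {G : Type} {arG : G → ℕ} {Q : Type} (Rg : TRS G arG)
    (enc2 : Term G arG → Q) (g : G) (Ss : Fin (arG g) → Set Q) : Prop :=
  ∃ (ls : Fin (arG g) → Term G arG) (r : Term G arG),
    (Term.app g ls, r) ∈ Rg.rules ∧ ∀ i, enc2 (stPattern (ls i)) ∈ Ss i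

/-- The transition rules of the automaton `𝒟(ℛ)` over `𝓕`, built from the transition
rules `Γ'` of `𝒞'_{NF}(ℛ)` over `𝓕 ∪ {•}`. -/
def DTrans {F : Type} {ar : F → ℕ} {Q : Type} (Rb : TRS (Option F) (arB ar))
    (Γ' : Set (TARule (Option F) (arB ar) Q))
    (enc enc2 : Term (Option F) (arB ar) → Q) :
    Set (TARule F ar (Set Q × Set Q)) :=
  { ρ | ∃ (f : F) (SP : Fin (ar f) → Set Q × Set Q) (P1 P2 : Set Q),
      P1 ⊆ (⋃ i : Fin (ar f), oneStep Γ' (some f)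
              (fun j => @ite _ (j = i) (instDecidableEqFin _ j i) (SP j).2 (SP j).1)) ∧
      (∀ (i : Fin (ar f)), ∀ q ∈ (SP i).2,
        (P1 ∩ oneStep Γ' (some f) (fun j => @ite _ (j = i) (instDecidableEqFin _ j i) {q} (SP j).1)).Nonempty) ∧
      ((LhsMatch Rb enc2 (some f) (fun i => (SP i).1) ∧ P2 = {enc (Term.var 0)}) ∨
       (¬ LhsMatch Rb enc2 (some f) (fun i => (SP i).1) ∧ P2 = (∅ : Set Q))) ∧
      ρ = ⟨f, SP, (oneStep Γ' (some f) (fun i => (SP i).1), P1 ∪ P2)⟩ }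

/-- The automaton `𝒟(ℛ)`: final states are the pairs `[S,P]` with `q_r ∈ S` and
`P ⊆ Q_f`. -/
def DAutomaton {F : Type} {ar : F → ℕ} {Q : Type} (Rb : TRS (Option F) (arB ar))
    (Γ' : Set (TARule (Option F) (arB ar) Q))
    (enc enc2 : Term (Option F) (arB ar) → Q) (qr : Q) (Qf : Set Q) :
    TreeAutomaton F ar (Set Q × Set Q) where
  trans := DTrans Rb Γ' enc enc2
  final := { SP | qr ∈ SP.1 ∧ SP.2 ⊆ Qf }

/-! ## Growing approximations -/

/-- `VarRepl t t'` : `t'` is obtained from `t` by replacing occurrences of variables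
by (possibly other) variables. -/
inductive VarRepl {F : Type} {ar : F → ℕ} : Term F ar → Term F ar → Prop
  | var (n m : ℕ) : VarRepl (Term.var n) (Term.var m)
  | app (f : F) (ts ts' : Fin (ar f) → Term F ar) :
      (∀ i, VarRepl (ts i) (ts' i)) → VarRepl (Term.app f ts) (Term.app f ts')

/-- `Rg` is a growing approximation of `R`: a right-linear growing TRS obtained from
`R` by replacing, in each right-hand side, occurrences of variables by variables not
occurring in the corresponding left-hand side. -/
def IsGrowingApprox {F : Type} {ar : F → ℕ} (R Rg : TRS F ar) : Prop :=
  Rg.RightLinear ∧ Rg.Growing ∧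
  (∀ lr ∈ Rg.rules, ∃ lr' ∈ R.rules, lr.1 = lr'.1 ∧ VarRepl lr'.2 lr.2 ∧
      ∀ n ∈ lr.2.vars, n ∉ lr.1.vars) ∧
  (∀ lr ∈ R.rules, ∃ lr' ∈ Rg.rules, lr.1 = lr'.1 ∧ VarRepl lr.2 lr'.2 ∧
      ∀ n ∈ lr'.2.vars, n ∉ lr'.1.vars)

/-! ## The signature `𝓖 = 𝓕 ∪ {f° : f ∈ 𝓕}` -/

/-- The arity function of the signature `𝓕 ∪ {f° : f ∈ 𝓕}` (`inl f` is `f`,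
`inr f` is `f°`). -/
def arC {F : Type} (ar : F → ℕ) : F ⊕ F → ℕ
  | Sum.inl f => ar f
  | Sum.inr f => ar f

/-- The embedding of `𝒯(𝓕)`-terms into terms over `𝓕 ∪ {f° : f ∈ 𝓕}`. -/
def liftC {F : Type} {ar : F → ℕ} : Term F ar → Term (F ⊕ F) (arC ar) :=
  Term.relabel Sum.inl (fun _ => rfl)

/-- `t°`: mark the root symbol of `t`. -/
def circTm {F : Type} {ar : F → ℕ} : Term F ar → Term (F ⊕ F) (arC ar)
  | Term.var n => Term.var n
  | Term.app f ts => Term.app (Sum.inr f) fun i => liftC (ts i)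

/-- A TRS over `𝓕` viewed as a TRS over `𝓕 ∪ {f° : f ∈ 𝓕}`. -/
def TRS.liftC {F : Type} {ar : F → ℕ} (R : TRS F ar) : TRS (F ⊕ F) (arC ar) :=
  R.relabel Sum.inl (fun _ => rfl)

/-- The TRS `𝒮° = 𝒮 ∪ {l° → r | l → r ∈ 𝒮}` over the signature `𝓕 ∪ {f° : f ∈ 𝓕}`. -/
def TRS.circ {F : Type} {ar : F → ℕ} (S : TRS F ar) : TRS (F ⊕ F) (arC ar) where
  rules := S.liftC.rules ∪ (fun lr => (circTm lr.1, _root_.liftC lr.2)) '' S.rules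
  finite := S.liftC.finite.union (S.finite.image _)
  lhs_not_var := by
    rintro lr (h | ⟨lr0, h0, rfl⟩) n hn
    · exact S.liftC.lhs_not_var lr h n hn
    · dsimp only at hn
      cases h1 : lr0.1 with
      | var m => exact absurd h1 (S.lhs_not_var lr0 h0 m)
      | app f ts =>
          rw [h1] at hn
          simp only [circTm] at hn
          cases hn

/-- The transitions added to `ℬ(𝒮°)` to obtain `𝒜_{REDEX_{𝒮°}}`:
`f(⟨l₁⟩,…,⟨lₙ⟩) → q_f` and `f°(⟨l₁⟩,…,⟨lₙ⟩) → q_f` for each left-hand side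
`f(l₁,…,lₙ)` of a rule of `𝒮`. -/
def CircRedexRules {F : Type} {ar : F → ℕ} {Q : Type} (S : TRS F ar)
    (enc : Term (F ⊕ F) (arC ar) → Q) (qf : Q) : Set (TARule (F ⊕ F) (arC ar) Q) :=
  { ρ | ∃ (f : F) (ls : Fin (ar f) → Term F ar) (r : Term F ar),
      (Term.app f ls, r) ∈ S.rules ∧
      (ρ = ⟨Sum.inl f, fun i => enc (stPattern (liftC (ls i))), qf⟩ ∨
       ρ = ⟨Sum.inr f, fun i => enc (stPattern (liftC (ls i))), qf⟩) }

/-! ## The automaton `𝒟'(ℛ,𝒮)` -/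

/-- The data of the construction of `𝒞'_{RS_{𝒮°}}(ℛ)`: the saturated automaton
`𝒞_{RS_{𝒮°}}(ℛ)`, a fresh copy `⟪t⟫` (encoded by `enc2`, with `⟪x⟫ = ⟨x⟩`) of the
states of `ℬ(ℛ)`, and an automaton `𝒞_{REDEX_𝒮}(𝒮)` (transitions `Etrans`, final
states `Qf'`) recognizing the non-`𝒮`-root-stable ground terms of `𝒯(𝓕)`. -/
structure CrsSetup {F : Type} [Fintype F] {ar : F → ℕ} (Q : Type) [Fintype Q]
    (R S : TRS F ar) extends CSetup Q R.liftC (TRS.RSset S.circ) where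
  enc2 : Term (F ⊕ F) (arC ar) → Q
  henc2 : Set.InjOn enc2 (BStateSet R.liftC)
  hx : enc2 (Term.var 0) = enc (Term.var 0)
  hfresh2 : (enc2 '' (BStateSet R.liftC \ {Term.var 0})) ∩
              (QA ∪ enc '' BStateSet R.liftC) = ∅
  Etrans : Set (TARule (F ⊕ F) (arC ar) Q)
  Qf' : Set Q
  hQf' : Qf' ⊆ statesOf Etrans
  hEfresh : statesOf Etrans ∩
      (QA ∪ enc '' BStateSet R.liftC ∪ enc2 '' (BStateSet R.liftC \ {Term.var 0})) = ∅
  hE : ∀ t : Term (F ⊕ F) (arC ar),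
      (t.Ground ∧ ∃ q ∈ Qf', Reaches Etrans t q) ↔
      (∃ s : Term F ar, t = liftC s ∧ s.Ground ∧ ¬ S.RootStable s)

namespace CrsSetup

variable {F : Type} [Fintype F] {ar : F → ℕ} {Q : Type} [Fintype Q] {R S : TRS F ar}

/-- The transition rules `Γ'` of the automaton `𝒞'_{RS_{𝒮°}}(ℛ)`. -/
def Γ' (C : CrsSetup Q R S) : Set (TARule (F ⊕ F) (arC ar) Q) :=
  C.toCSetup.Γsat ∪ BMatch R.liftC C.enc2 ∪ C.Etrans

end CrsSetup

/-- The transition rules of the automaton `𝒟'(ℛ,𝒮)` over `𝓕`, built from the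
transition rules `Γ'` of `𝒞'_{RS_{𝒮°}}(ℛ)`. -/
def DTransRS {F : Type} {ar : F → ℕ} {Q : Type} (Rg : TRS (F ⊕ F) (arC ar))
    (Γ' : Set (TARule (F ⊕ F) (arC ar) Q)) (enc2 : Term (F ⊕ F) (arC ar) → Q) :
    Set (TARule F ar (Set Q × Set Q)) :=
  { ρ | ∃ (f : F) (SP : Fin (ar f) → Set Q × Set Q) (P1 P2 : Set Q),
      P1 ⊆ (⋃ i : Fin (ar f), oneStep Γ' (Sum.inl f)
              (fun j => @ite _ (j = i) (instDecidableEqFin _ j i) (SP j).2 (SP j).1)) ∧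
      (∀ (i : Fin (ar f)), ∀ q ∈ (SP i).2,
        (P1 ∩ oneStep Γ' (Sum.inl f) (fun j => @ite _ (j = i) (instDecidableEqFin _ j i) {q} (SP j).1)).Nonempty) ∧
      ((LhsMatch Rg enc2 (Sum.inl f) (fun i => (SP i).1) ∧ P2.Nonempty ∧
          P2 ⊆ oneStep Γ' (Sum.inr f) (fun i => (SP i).1)) ∨
       (¬ LhsMatch Rg enc2 (Sum.inl f) (fun i => (SP i).1) ∧ P2 = (∅ : Set Q))) ∧
      ρ = ⟨f, SP, (oneStep Γ' (Sum.inl f) (fun i => (SP i).1), P1 ∪ P2)⟩ }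

/-- The automaton `𝒟'(ℛ,𝒮)`: final states are the pairs `[S,P]` with
`S ∩ Q_f' ≠ ∅` and `P ⊆ Q_f`. -/
def DAutomatonRS {F : Type} {ar : F → ℕ} {Q : Type} (Rg : TRS (F ⊕ F) (arC ar))
    (Γ' : Set (TARule (F ⊕ F) (arC ar) Q)) (enc2 : Term (F ⊕ F) (arC ar) → Q)
    (Qf' Qf : Set Q) : TreeAutomaton F ar (Set Q × Set Q) where
  trans := DTransRS Rg Γ' enc2
  final := { SP | (SP.1 ∩ Qf').Nonempty ∧ SP.2 ⊆ Qf }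

/-!
If `u → v` rewrites the redex `lσ` at position `p` into `rσ` and `v` reaches a state `q`, then
the run on `v` assigns a state `q₀` to `rσ`. Because `r` is linear, that run splits into a run
of `r` with its variables read as states `θ(x)` and runs of the `σ(x)` into `θ(x)`; so the
saturation has added `f(q₁,…,qₙ) → q₀` for `l = f(l₁,…,lₙ)`, and `lσ` reaches `q₀`: through
`θ` for the variables shared with `r`, through `⟨x⟩` (which accepts every ground term) for
the others, and through `⟨lᵢ⟩` of `ℬ(ℛ)` for the non-variable arguments. Hence acceptance
is preserved by backward rewriting of ground terms.
-/

namespace Term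

variable {F : Type} {ar : F → ℕ}

@[simp] lemma subst_app (σ : ℕ → Term F ar) (f : F) (ts : Fin (ar f) → Term F ar) :
    (app f ts).subst σ = app f fun i => (ts i).subst σ := rfl

@[simp] lemma subst_var (σ : ℕ → Term F ar) (n : ℕ) : (var n).subst σ = σ n := rfl

@[simp] lemma subtermAt_nil (t : Term F ar) : t.subtermAt [] = some t := by
  cases t <;> rfl

@[simp] lemma replaceAt_nil (t u : Term F ar) : t.replaceAt [] u = some u := by
  cases t <;> rfl

@[simp] lemma mem_vars_var {m n : ℕ} : n ∈ (var m : Term F ar).vars ↔ n = m := by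
  simp [vars]

@[simp] lemma mem_vars_app {f : F} {ts : Fin (ar f) → Term F ar} {n : ℕ} :
    n ∈ (app f ts).vars ↔ ∃ i, n ∈ (ts i).vars := by
  simp [vars]

lemma ground_app_iff {f : F} {ts : Fin (ar f) → Term F ar} :
    (app f ts).Ground ↔ ∀ i, (ts i).Ground := by
  simp only [Ground, Finset.eq_empty_iff_forall_notMem, mem_vars_app, not_exists]
  exact forall_comm

lemma not_ground_var (n : ℕ) : ¬ (var n : Term F ar).Ground := by
  simp [Ground, vars]

lemma subst_eq_self_of_ground {t : Term F ar} (h : t.Ground) (σ : ℕ → Term F ar) :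
    t.subst σ = t := by
  induction t with
  | var n => exact absurd h (not_ground_var n)
  | app f ts ih => simp only [subst_app, fun i => ih i (ground_app_iff.1 h i)]

lemma ground_subst {σ : ℕ → Term F ar} (hσ : ∀ n, (σ n).Ground) (t : Term F ar) :
    (t.subst σ).Ground := by
  induction t with
  | var n => exact hσ n
  | app f ts ih => exact ground_app_iff.2 ih

lemma ground_of_ground_subst {l : Term F ar} {σ : ℕ → Term F ar}
    (h : (l.subst σ).Ground) {n : ℕ} (hn : n ∈ l.vars) : (σ n).Ground := by
  induction l with
  | var m => rwa [mem_vars_var.1 hn]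
  | app f ts ih =>
    obtain ⟨i, hi⟩ := mem_vars_app.1 hn
    exact ih i (ground_app_iff.1 h i) hi

lemma subst_subst (t : Term F ar) (σ γ : ℕ → Term F ar) :
    (t.subst σ).subst γ = t.subst fun n => (σ n).subst γ := by
  induction t with
  | var n => rfl
  | app f ts ih => simp only [subst_app, ih]

lemma mem_vars_iff_count_ne_zero {t : Term F ar} {n : ℕ} : n ∈ t.vars ↔ t.count n ≠ 0 := by
  induction t with
  | var m => simp [count, eq_comm]
  | app f ts ih => simp [count, ih]

lemma Linear.arg {f : F} {ts : Fin (ar f) → Term F ar} (h : (app f ts).Linear)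
    (i : Fin (ar f)) : (ts i).Linear := fun n =>
  (Finset.single_le_sum (f := fun j => (ts j).count n) (fun _ _ => Nat.zero_le _)
    (Finset.mem_univ i)).trans (h n)

lemma Linear.eq_of_mem_vars {f : F} {ts : Fin (ar f) → Term F ar} (h : (app f ts).Linear)
    {n : ℕ} {i j : Fin (ar f)} (hi : n ∈ (ts i).vars) (hj : n ∈ (ts j).vars) : i = j := by
  by_contra hij
  have hsum : (ts i).count n + (ts j).count n ≤ ∑ k, (ts k).count n := by
    have := Finset.sum_le_sum_of_subset (f := fun k => (ts k).count n)
      (Finset.subset_univ {i, j})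
    rwa [Finset.sum_pair hij] at this
  have := h n
  have := mem_vars_iff_count_ne_zero.1 hi
  have := mem_vars_iff_count_ne_zero.1 hj
  simp only [count] at *
  omega

lemma subtermAt_append {p p' : List ℕ} {s t w : Term F ar} (h : s.subtermAt p = some t)
    (h' : t.subtermAt p' = some w) : s.subtermAt (p ++ p') = some w := by
  induction p generalizing s with
  | nil => simp_all
  | cons i p ih =>
    cases s with
    | var m => simp [subtermAt] at h
    | app f ts =>
      simp only [subtermAt, List.cons_append] at h ⊢
      split at h
      · rw [dif_pos ‹_›]; exact ih h
      · simp at h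

lemma Ground.subtermAt {p : List ℕ} {s t : Term F ar} (hs : s.Ground)
    (h : s.subtermAt p = some t) : t.Ground := by
  induction p generalizing s with
  | nil => simp_all
  | cons i p ih =>
    cases s with
    | var m => simp [Term.subtermAt] at h
    | app f ts =>
      simp only [Term.subtermAt] at h
      split at h
      · exact ih (ground_app_iff.1 hs _) h
      · simp at h

lemma replaceAt_of_subtermAt {p : List ℕ} {s u : Term F ar} (h : s.subtermAt p = some u) :
    s.replaceAt p u = some s := by
  induction p generalizing s with
  | nil => simp_all
  | cons i p ih =>
    cases s with
    | var m => simp [subtermAt] at h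
    | app f ts =>
      simp only [subtermAt] at h
      split at h
      · simp only [replaceAt]
        rw [dif_pos ‹i < ar f›, ih h]
        simp
      · simp at h

lemma subtermAt_subst (γ : ℕ → Term F ar) {p : List ℕ} {s u : Term F ar}
    (h : s.subtermAt p = some u) : (s.subst γ).subtermAt p = some (u.subst γ) := by
  induction p generalizing s with
  | nil => simp_all
  | cons i p ih =>
    cases s with
    | var m => simp [subtermAt] at h
    | app f ts =>
      simp only [subtermAt, subst_app] at h ⊢
      split at h
      · rw [dif_pos ‹_›]; exact ih h
      · simp at h

lemma replaceAt_subst (γ : ℕ → Term F ar) {p : List ℕ} {s v t : Term F ar}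
    (h : s.replaceAt p v = some t) :
    (s.subst γ).replaceAt p (v.subst γ) = some (t.subst γ) := by
  induction p generalizing s t with
  | nil => simp_all
  | cons i p ih =>
    cases s with
    | var m => simp [replaceAt] at h
    | app f ts =>
      simp only [replaceAt] at h
      split at h
      · obtain ⟨s₁, hs₁, rfl⟩ := Option.map_eq_some_iff.1 h
        simp only [subst_app, replaceAt]
        rw [dif_pos ‹i < ar f›, ih hs₁]
        simp only [Option.map_some, Option.some.injEq, app.injEq, heq_eq_eq, true_and]
        funext j
        rcases eq_or_ne j ⟨i, ‹_›⟩ with rfl | hj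
        · simp
        · simp [Function.update_of_ne hj]
      · simp at h

end Term

lemma Rewrites.subst {F : Type} {ar : F → ℕ} {R : Set (Term F ar × Term F ar)}
    {s t : Term F ar} (γ : ℕ → Term F ar) (h : Rewrites R s t) :
    Rewrites R (s.subst γ) (t.subst γ) := by
  obtain ⟨p, l, r, σ, hR, hsub, hrep⟩ := h
  refine ⟨p, l, r, fun n => (σ n).subst γ, hR, ?_, ?_⟩
  · simpa only [Term.subst_subst] using Term.subtermAt_subst γ hsub
  · simpa only [Term.subst_subst] using Term.replaceAt_subst γ hrep

section Runs

variable {F : Type} {ar : F → ℕ} {Q : Type} {Γ Γ' : Set (TARule F ar Q)}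

lemma Reaches.mono (h : Γ ⊆ Γ') {t : Term F ar} {q : Q} (ht : Reaches Γ t q) :
    Reaches Γ' t q := by
  induction ht with
  | app _ hmem ih => exact .app ih (h hmem)

lemma ReachesT.mono (h : Γ ⊆ Γ') {θ : ℕ → Q} {t : Term F ar} {q : Q}
    (ht : ReachesT Γ θ t q) : ReachesT Γ' θ t q := by
  induction ht with
  | var n => exact .var n
  | app _ hmem ih => exact .app ih (h hmem)

lemma Reaches.target_mem {Qc : Set Q} (h : ∀ ρ ∈ Γ, ρ.2.2 ∈ Qc) {t : Term F ar} {q : Q}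
    (ht : Reaches Γ t q) : q ∈ Qc := by
  cases ht with
  | app _ hmem => exact h _ hmem

lemma ReachesT.congr_vars {θ θ' : ℕ → Q} {t : Term F ar} {q : Q} (ht : ReachesT Γ θ t q)
    (hθ : ∀ n ∈ t.vars, θ n = θ' n) : ReachesT Γ θ' t q := by
  induction ht with
  | var n => exact hθ n (by simp) ▸ .var n
  | app _ hmem ih =>
    exact .app (fun i => ih i fun n hn => hθ n (Term.mem_vars_app.2 ⟨i, hn⟩)) hmem

lemma Reaches.exists_reachesT_of_subst {r : Term F ar} (hr : r.Linear)
    {σ : ℕ → Term F ar} {q : Q} (h : Reaches Γ (r.subst σ) q) :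
    ∃ θ : ℕ → Q, ReachesT Γ θ r q ∧ ∀ n ∈ r.vars, Reaches Γ (σ n) (θ n) := by
  induction r generalizing q with
  | var n => exact ⟨fun _ => q, .var n, fun m hm => Term.mem_vars_var.1 hm ▸ h⟩
  | app f ts ih =>
    obtain @⟨_, _, qs, _, hts, hmem⟩ := h
    choose θs hθs hσ using fun i => ih i (hr.arg i) (hts i)
    classical
    refine ⟨fun n => if h : ∃ i, n ∈ (ts i).vars then θs h.choose n else q, ?_, ?_⟩
    · refine .app (fun i => (hθs i).congr_vars fun n hn => ?_) hmem
      have hex : ∃ j, n ∈ (ts j).vars := ⟨i, hn⟩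
      simp only [dif_pos hex, hr.eq_of_mem_vars hex.choose_spec hn]
    · intro n hn
      have hex := Term.mem_vars_app.1 hn
      simpa only [dif_pos hex] using hσ hex.choose n hex.choose_spec

lemma Reaches.exists_of_replaceAt {p : List ℕ} {s v s' : Term F ar} {q : Q}
    (h : s.replaceAt p v = some s') (hq : Reaches Γ s' q) :
    ∃ q₀, Reaches Γ v q₀ ∧
      ∀ w, Reaches Γ w q₀ → ∀ s'', s.replaceAt p w = some s'' → Reaches Γ s'' q := by
  induction p generalizing s s' q with
  | nil =>
    simp only [Term.replaceAt_nil, Option.some.injEq] at h ⊢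
    subst h
    exact ⟨q, hq, fun w hw s'' h'' => h'' ▸ hw⟩
  | cons i p ih =>
    cases s with
    | var m => simp [Term.replaceAt] at h
    | app f ts =>
      simp only [Term.replaceAt] at h ⊢
      split at h
      · obtain ⟨s₁, hs₁, rfl⟩ := Option.map_eq_some_iff.1 h
        obtain @⟨_, _, qs, _, hts, hmem⟩ := hq
        obtain ⟨q₀, hv, hback⟩ := ih hs₁ (by simpa using hts ⟨i, ‹_›⟩)
        refine ⟨q₀, hv, fun w hw s'' h'' => ?_⟩
        rw [dif_pos ‹_›] at h''
        obtain ⟨s₂, hs₂, rfl⟩ := Option.map_eq_some_iff.1 h''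
        refine .app (fun j => ?_) hmem
        rcases eq_or_ne j ⟨i, ‹_›⟩ with rfl | hj
        · simpa using hback w hw s₂ hs₂
        · simpa [Function.update_of_ne hj] using hts j
      · simp at h

end Runs

section Saturation

variable {G : Type} {arG : G → ℕ} {Q : Type} {R : TRS G arG} {enc : Term G arG → Q}
  {Qc : Set Q} {Γ0 : Set (TARule G arG Q)}

lemma satStep_iterate_mono {m n : ℕ} (h : m ≤ n) :
    (satStep R enc Qc)^[m] Γ0 ⊆ (satStep R enc Qc)^[n] Γ0 := by
  induction h with
  | refl => rfl
  | step _ ih =>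
    rw [Function.iterate_succ_apply']
    exact ih.trans Set.subset_union_left

lemma satStep_iterate_subset_satGamma (n : ℕ) :
    (satStep R enc Qc)^[n] Γ0 ⊆ satGamma R enc Qc Γ0 :=
  Set.subset_iUnion (fun n => (satStep R enc Qc)^[n] Γ0) n

lemma ReachesT.exists_satStep_iterate {θ : ℕ → Q} {t : Term G arG} {q : Q}
    (h : ReachesT (satGamma R enc Qc Γ0) θ t q) :
    ∃ n, ReachesT ((satStep R enc Qc)^[n] Γ0) θ t q := by
  induction h with
  | var n => exact ⟨0, .var n⟩
  | @app f ts qs q hts hmem ih =>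
    choose N hN using ih
    obtain ⟨m, hm⟩ := Set.mem_iUnion.1 hmem
    refine ⟨Finset.univ.sup N ⊔ m, .app (qs := qs) (fun i => ?_) ?_⟩
    · exact (hN i).mono (satStep_iterate_mono ((Finset.le_sup (Finset.mem_univ i)).trans
        le_sup_left))
    · exact satStep_iterate_mono le_sup_right hm

/-- `satGamma` is closed under the saturation inference rule. -/
lemma satArg_mem_satGamma {f : G} {ls : Fin (arG f) → Term G arG} {r : Term G arG}
    (hR : (Term.app f ls, r) ∈ R.rules) {θ : ℕ → Q} (hθ : ∀ n ∈ r.vars, θ n ∈ Qc) {q : Q}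
    (hr : ReachesT (satGamma R enc Qc Γ0) θ r q) :
    (⟨f, fun i => satArg enc θ r.vars (ls i), q⟩ : TARule G arG Q) ∈ satGamma R enc Qc Γ0 := by
  obtain ⟨n, hn⟩ := hr.exists_satStep_iterate
  refine satStep_iterate_subset_satGamma (n + 1) ?_
  rw [Function.iterate_succ_apply']
  exact Or.inr ⟨f, ls, r, θ, q, hR, hθ, hn, rfl⟩

lemma satStep_target_mem {Γ : Set (TARule G arG Q)} (h : ∀ ρ ∈ Γ, ρ.2.2 ∈ Qc) :
    ∀ ρ ∈ satStep R enc Qc Γ, ρ.2.2 ∈ Qc := by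
  rintro ρ (hρ | ⟨f, ls, r, θ, q, hR, hθ, hr, rfl⟩)
  · exact h ρ hρ
  · cases hr with
    | var n => exact hθ n (by simp)
    | app _ hmem =>
      have hq := h _ hmem
      exact hq

lemma satGamma_target_mem (h : ∀ ρ ∈ Γ0, ρ.2.2 ∈ Qc) :
    ∀ ρ ∈ satGamma R enc Qc Γ0, ρ.2.2 ∈ Qc := by
  have hiter : ∀ n, ∀ ρ ∈ (satStep R enc Qc)^[n] Γ0, ρ.2.2 ∈ Qc := by
    intro n
    induction n with
    | zero => exact h
    | succ n ih =>
      rw [Function.iterate_succ_apply']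
      exact satStep_target_mem ih
  intro ρ hρ
  obtain ⟨n, hn⟩ := Set.mem_iUnion.1 hρ
  exact hiter n ρ hn

end Saturation

section MatchingAutomaton

variable {G : Type} {arG : G → ℕ} {Q : Type} {R : TRS G arG} {enc : Term G arG → Q}
  {Γ : Set (TARule G arG Q)}

lemma BTrans_target_mem {ρ : TARule G arG Q} (hρ : ρ ∈ BTrans R enc) :
    ρ.2.2 ∈ enc '' BStateSet R := by
  rcases hρ with ⟨f, ts, hts, rfl⟩ | ⟨f, rfl⟩
  · exact ⟨Term.app f ts, Or.inl ⟨_, hts, rfl⟩, rfl⟩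
  · exact ⟨Term.var 0, Or.inr rfl, rfl⟩

lemma SR.mem_of_isSubtermOf {t w : Term G arG} (ht : t ∈ SR R) (h : w.IsSubtermOf t) :
    w ∈ SR R := by
  obtain ⟨lr, hlr, f, ts, hl, i, p, hp⟩ := ht
  obtain ⟨p', hp'⟩ := h
  exact ⟨lr, hlr, f, ts, hl, i, p ++ p', Term.subtermAt_append hp hp'⟩

lemma SR.arg_mem {g : G} {us : Fin (arG g) → Term G arG} (h : Term.app g us ∈ SR R)
    (j : Fin (arG g)) : us j ∈ SR R :=
  SR.mem_of_isSubtermOf h ⟨[j.val], by simp [Term.subtermAt]⟩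

lemma reaches_var_zero (h : BProp enc ⊆ Γ) {t : Term G arG} (hg : t.Ground) :
    Reaches Γ t (enc (Term.var 0)) := by
  induction t with
  | var n => exact absurd hg (Term.not_ground_var n)
  | app f ts ih => exact .app (fun i => ih i (Term.ground_app_iff.1 hg i)) (h ⟨f, rfl⟩)

lemma reaches_stPattern (h : BTrans R enc ⊆ Γ) {u : Term G arG} (hu : u ∈ SR R)
    {σ : ℕ → Term G arG} (hg : (u.subst σ).Ground) :
    Reaches Γ (u.subst σ) (enc (stPattern u)) := by
  induction u with
  | var n => exact reaches_var_zero (fun ρ hρ => h (Or.inr hρ)) hg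
  | app g us ih =>
    exact .app (fun i => ih i (SR.arg_mem hu i) (Term.ground_app_iff.1 hg i))
      (h (Or.inl ⟨g, us, hu, rfl⟩))

lemma reaches_satArg (h : BTrans R enc ⊆ Γ) {u : Term G arG} (hu : u ∈ SR R)
    {σ : ℕ → Term G arG} (hg : (u.subst σ).Ground) {θ : ℕ → Q} {rv : Finset ℕ}
    (hθ : ∀ n ∈ rv, Reaches Γ (σ n) (θ n)) :
    Reaches Γ (u.subst σ) (satArg enc θ rv u) := by
  cases u with
  | var n =>
    by_cases hn : n ∈ rv
    · simpa [satArg, hn] using hθ n hn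
    · simpa [satArg, hn] using reaches_var_zero (fun ρ hρ => h (Or.inr hρ)) hg
  | app g us => exact reaches_stPattern h hu hg

end MatchingAutomaton

section BackwardClosure

variable {G : Type} {arG : G → ℕ} {Q : Type} {R : TRS G arG} {enc : Term G arG → Q}
  {Qc : Set Q} {Γ0 : Set (TARule G arG Q)}

lemma reaches_satGamma_of_rewrites (hrl : R.RightLinear) (hB : BTrans R enc ⊆ Γ0)
    (hQc : ∀ ρ ∈ Γ0, ρ.2.2 ∈ Qc) {u v : Term G arG} {q : Q} (hu : u.Ground)
    (h : Rewrites R.rules u v) (hv : Reaches (satGamma R enc Qc Γ0) v q) :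
    Reaches (satGamma R enc Qc Γ0) u q := by
  obtain ⟨p, l, r, σ, hR, hsub, hrep⟩ := h
  obtain ⟨f, ls, rfl⟩ : ∃ f ls, l = Term.app f ls := by
    cases l with
    | var m => exact absurd rfl (R.lhs_not_var _ hR m)
    | app f ls => exact ⟨f, ls, rfl⟩
  obtain ⟨q₀, hr₀, hback⟩ := hv.exists_of_replaceAt hrep
  obtain ⟨θ, hθr, hσθ⟩ := hr₀.exists_reachesT_of_subst (hrl _ hR)
  have hθQc : ∀ n ∈ r.vars, θ n ∈ Qc := fun n hn =>
    (hσθ n hn).target_mem (satGamma_target_mem hQc)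
  have hrule := satArg_mem_satGamma hR hθQc hθr
  have hlg : ∀ i, ((ls i).subst σ).Ground := Term.ground_app_iff.1 (hu.subtermAt hsub)
  have hls : ∀ i, ls i ∈ SR R := fun i => ⟨_, hR, f, ls, rfl, i, [], Term.subtermAt_nil _⟩
  have hl : Reaches (satGamma R enc Qc Γ0) ((Term.app f ls).subst σ) q₀ :=
    .app (fun i => reaches_satArg ((satStep_iterate_subset_satGamma 0).trans' hB) (hls i)
      (hlg i) hσθ) hrule
  exact hback _ hl u (Term.replaceAt_of_subtermAt hsub)

/-- Intermediate terms of the sequence may contain variables; instantiating all of them by the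
ground term `t` keeps the sequence a rewrite sequence and fixes both ends. -/
lemma reaches_satGamma_of_rewritesStar (hrl : R.RightLinear) (hB : BTrans R enc ⊆ Γ0)
    (hQc : ∀ ρ ∈ Γ0, ρ.2.2 ∈ Qc) {s t : Term G arG} {q : Q} (hs : s.Ground) (ht : t.Ground)
    (h : RewritesStar R.rules s t) (hq : Reaches (satGamma R enc Qc Γ0) t q) :
    Reaches (satGamma R enc Qc Γ0) s q := by
  rw [← Term.subst_eq_self_of_ground hs fun _ => t]
  clear hs
  induction h using Relation.ReflTransGen.head_induction_on with
  | refl => rwa [Term.subst_eq_self_of_ground ht]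
  | head hstep _ ih =>
    exact reaches_satGamma_of_rewrites hrl hB hQc (Term.ground_subst (fun _ => ht) _)
      (hstep.subst _) ih

end BackwardClosure

theorem statement3_general {G : Type} {arG : G → ℕ} {Q : Type}
    (R : TRS G arG) (hrl : R.RightLinear)
    (enc : Term G arG → Q)
    (A : TreeAutomaton G arG Q) (QA : Set Q)
    (hAstates : ∀ ρ ∈ A.trans, ρ.2.2 ∈ QA ∧ ∀ i, ρ.2.1 i ∈ QA)
    (T : Set (Term G arG)) (hT : T = Lang A) :
    ∀ s : Term G arG, s.Ground → (∃ t ∈ T, RewritesStar R.rules s t) →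
      ∃ q ∈ A.final,
        Reaches (satGamma R enc (QA ∪ enc '' BStateSet R) (A.trans ∪ BTrans R enc)) s q := by
  rintro s hs ⟨t, htT, hst⟩
  rw [hT] at htT
  obtain ⟨ht, q, hqf, hq⟩ := htT
  have hQc : ∀ ρ ∈ A.trans ∪ BTrans R enc, ρ.2.2 ∈ QA ∪ enc '' BStateSet R := by
    rintro ρ (hρ | hρ)
    · exact Or.inl (hAstates ρ hρ).1
    · exact Or.inr (BTrans_target_mem hρ)
  refine ⟨q, hqf, reaches_satGamma_of_rewritesStar hrl Set.subset_union_right hQc hs ht hst ?_⟩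
  exact hq.mono ((satStep_iterate_subset_satGamma 0).trans' Set.subset_union_left)

/-- Let `ℛ` be a right-linear TRS over `𝓖` and `𝒞_T(ℛ)` the automaton
obtained by saturating the union of `𝒜_T` and `ℬ(ℛ)`.  Then every ground term that
rewrites in `ℛ` to a term of `T` is accepted by `𝒞_T(ℛ)`. -/
theorem statement3 {G : Type} [Fintype G] {arG : G → ℕ} {Q : Type} [Fintype Q]
    (R : TRS G arG) (hrl : R.RightLinear)
    (enc : Term G arG → Q) (henc : Set.InjOn enc (BStateSet R))
    (A : TreeAutomaton G arG Q) (QA : Set Q)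
    (hAstates : ∀ ρ ∈ A.trans, ρ.2.2 ∈ QA ∧ ∀ i, ρ.2.1 i ∈ QA)
    (hfinal : A.final ⊆ QA)
    (hacc : ∀ q ∈ QA, ∃ s : Term G arG, s.Ground ∧ Reaches A.trans s q)
    (hshared : ∀ q ∈ QA ∩ enc '' BStateSet R, ∀ s : Term G arG,
        Reaches A.trans s q ↔ Reaches (BTrans R enc) s q)
    (T : Set (Term G arG)) (hT : T = Lang A) :
    ∀ s : Term G arG, s.Ground → (∃ t ∈ T, RewritesStar R.rules s t) →
      ∃ q ∈ A.final,
        Reaches (satGamma R enc (QA ∪ enc '' BStateSet R) (A.trans ∪ BTrans R enc)) s q :=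
  statement3_general R hrl enc A QA hAstates T hT
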